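/- arXiv:2502.00254 — 2 statements merged into one kernel-verified Lean document; each statement's English description precedes it below -/
import Mathlib

section
/- Let m ≥ 1 and let p, q be monic polynomials of degree 2m. Then Q_m(p ⊠_{2m} q) = Q_m(p) ⊠_m Q_m(q) ⊠_m H_m[−1/(2m); 1−1/(2m)], where H_m[−1/(2m); 1−1/(2m)] is the monic degree-m hypergeometric polynomial with e_k = binom(m,k) (−1/2)_k / (m−1/2)_k. -/
open Polynomial Finset

noncomputable section

namespace FFP

/-- Coefficient `e_k(p)` defined by `p(x) = Σ (-1)^k e_k(p) x^(n-k)`. -/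
def eC (n k : ℕ) (p : Polynomial ℂ) : ℂ := (-1) ^ k * p.coeff (n - k)

/-- Falling factorial `x(x-1)⋯(x-k+1)`. -/
def ffa (x : ℂ) (k : ℕ) : ℂ := ∏ i ∈ Finset.range k, (x - i)

/-- Rising factorial `x(x+1)⋯(x+k-1)`. -/
def rfa (x : ℂ) (k : ℕ) : ℂ := ∏ i ∈ Finset.range k, (x + i)

/-- Monic polynomial of degree `n` from prescribed `e_k` coefficients. -/
def ofE (n : ℕ) (f : ℕ → ℂ) : Polynomial ℂ :=
  ∑ k ∈ Finset.range (n + 1), Polynomial.C ((-1) ^ k * f k) * Polynomial.X ^ (n - k)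

/-- Finite free additive convolution. -/
def boxplus (n : ℕ) (p q : Polynomial ℂ) : Polynomial ℂ :=
  ofE n fun k => ffa (n : ℂ) k * ∑ ij ∈ Finset.HasAntidiagonal.antidiagonal k,
    eC n ij.1 p * eC n ij.2 q / (ffa (n : ℂ) ij.1 * ffa (n : ℂ) ij.2)

/-- Finite free multiplicative convolution. -/
def boxtimes (n : ℕ) (p q : Polynomial ℂ) : Polynomial ℂ :=
  ofE n fun k => eC n k p * eC n k q / (n.choose k : ℂ)

/-- Dilation: `(dil n α p)(x) = α^n p(x/α)` for polynomials of degree ≤ n. -/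
def dil (n : ℕ) (α : ℂ) (p : Polynomial ℂ) : Polynomial ℂ :=
  ∑ j ∈ Finset.range (n + 1), Polynomial.C (α ^ (n - j) * p.coeff j) * Polynomial.X ^ j

/-- Symmetrization. -/
def sym (n : ℕ) (p : Polynomial ℂ) : Polynomial ℂ := boxplus n p (dil n (-1) p)

/-- Degree halving operation. -/
def Qm (m : ℕ) (p : Polynomial ℂ) : Polynomial ℂ :=
  ofE m fun k => (-1) ^ k * eC (2 * m) (2 * k) p

/-- Degree doubling operation. -/
def Sm (p : Polynomial ℂ) : Polynomial ℂ := p.comp (Polynomial.X ^ 2)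

/-- Hypergeometric polynomial `H_n[b; a]`. -/
def hyp (n : ℕ) {j i : ℕ} (b : Fin j → ℝ) (a : Fin i → ℝ) : Polynomial ℂ :=
  ofE n fun k =>
    (n.choose k : ℂ) * (∏ t, ffa ((n : ℂ) * (b t : ℂ)) k) / ∏ s, ffa ((n : ℂ) * (a s : ℂ)) k

/-- Even hypergeometric polynomial `H^E_m[b; a](x) = H_m[b; a](x²)`. -/
def hypE (m : ℕ) {j i : ℕ} (b : Fin j → ℝ) (a : Fin i → ℝ) : Polynomial ℂ :=
  (hyp m b a).comp (Polynomial.X ^ 2)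

/-- A monic polynomial of degree `2m` is even: all odd `e`-coefficients vanish. -/
def IsEvenP (m : ℕ) (p : Polynomial ℂ) : Prop :=
  ∀ k ≤ 2 * m, Odd k → eC (2 * m) k p = 0

lemma ofE_coeff (n : ℕ) (f : ℕ → ℂ) {j : ℕ} (hj : j ≤ n) :
    (ofE n f).coeff (n - j) = (-1) ^ j * f j := by
  unfold ofE
  rw [Polynomial.finset_sum_coeff, Finset.sum_eq_single j]
  · rw [Polynomial.coeff_C_mul, Polynomial.coeff_X_pow, if_pos rfl, mul_one]
  · intro k hk hkj
    simp only [Polynomial.coeff_C_mul, Polynomial.coeff_X_pow]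
    rw [if_neg, mul_zero]
    intro h
    exact hkj (by rw [Finset.mem_range] at hk; omega)
  · intro h
    exact absurd (Finset.mem_range.mpr (by omega)) h

lemma eC_ofE (n : ℕ) (f : ℕ → ℂ) {k : ℕ} (hk : k ≤ n) :
    eC n k (ofE n f) = f k := by
  unfold eC
  rw [ofE_coeff n f hk, ← mul_assoc, ← pow_add, ← two_mul, pow_mul]
  norm_num

lemma ffa_succ (x : ℂ) (k : ℕ) : ffa x (k + 1) = ffa x k * (x - k) :=
  Finset.prod_range_succ _ _

lemma ffa_ne_zero (m : ℕ) {k : ℕ} (hk : k ≤ m) : ffa ((m : ℂ) - 1 / 2) k ≠ 0 := by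
  unfold ffa
  rw [Finset.prod_ne_zero_iff]
  intro i hi h
  rw [Finset.mem_range] at hi
  have h2 : ((2 * m : ℕ) : ℂ) = ((2 * i + 1 : ℕ) : ℂ) := by
    push_cast
    linear_combination 2 * h
  have := Nat.cast_injective (R := ℂ) h2
  omega

lemma key (m : ℕ) : ∀ k, k ≤ m →
    (-1 : ℂ) ^ k * (m.choose k : ℂ) * ffa ((m : ℂ) - 1 / 2) k
      = ((2 * m).choose (2 * k) : ℂ) * ffa (-1 / 2) k := by
  intro k
  induction k with
  | zero => simp [ffa]
  | succ k ih =>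
    intro hk
    have hk' : k ≤ m := by omega
    have ih' := ih hk'
    have c1 : ((m.choose (k + 1)) : ℂ) * (k + 1) = (m.choose k : ℂ) * ((m : ℂ) - k) := by
      have h1 := Nat.choose_succ_right_eq m k
      have h2 : ((m.choose (k + 1) * (k + 1) : ℕ) : ℂ) = ((m.choose k * (m - k) : ℕ) : ℂ) := by
        exact_mod_cast congrArg (Nat.cast : ℕ → ℂ) h1
      push_cast [Nat.cast_sub hk'] at h2
      linear_combination h2
    have c2 : (((2 * m).choose (2 * k + 1)) : ℂ) * (2 * k + 1)
        = ((2 * m).choose (2 * k) : ℂ) * (2 * (m : ℂ) - 2 * k) := by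
      have h1 := Nat.choose_succ_right_eq (2 * m) (2 * k)
      have h2 : (((2 * m).choose (2 * k + 1) * (2 * k + 1) : ℕ) : ℂ)
          = (((2 * m).choose (2 * k) * (2 * m - 2 * k) : ℕ) : ℂ) := by
        exact_mod_cast congrArg (Nat.cast : ℕ → ℂ) h1
      push_cast [Nat.cast_sub (show 2 * k ≤ 2 * m by omega)] at h2
      linear_combination h2
    have c3 : (((2 * m).choose (2 * k + 2)) : ℂ) * (2 * k + 2)
        = ((2 * m).choose (2 * k + 1) : ℂ) * (2 * (m : ℂ) - 2 * k - 1) := by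
      have h1 := Nat.choose_succ_right_eq (2 * m) (2 * k + 1)
      have h2 : (((2 * m).choose (2 * k + 2) * (2 * k + 2) : ℕ) : ℂ)
          = (((2 * m).choose (2 * k + 1) * (2 * m - (2 * k + 1)) : ℕ) : ℂ) := by
        exact_mod_cast congrArg (Nat.cast : ℕ → ℂ) h1
      push_cast [Nat.cast_sub (show 2 * k + 1 ≤ 2 * m by omega)] at h2
      linear_combination h2
    have h2k : 2 * (k + 1) = 2 * k + 2 := by ring
    rw [h2k, ffa_succ, ffa_succ]
    push_cast
    have hnz : (((k + 1) * ((2 * k + 1) * (2 * k + 2)) : ℕ) : ℂ) ≠ 0 :=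
      Nat.cast_ne_zero.mpr (by positivity)
    push_cast at hnz
    apply mul_right_cancel₀ hnz
    linear_combination (-(-1 : ℂ) ^ k * ffa ((m : ℂ) - 1 / 2) k * ((m : ℂ) - 1 / 2 - k) * (2 * k + 1) * (2 * k + 2)) * c1
      + (-ffa (-1 / 2) k * (-1 / 2 - (k : ℂ)) * ((k : ℂ) + 1) * (2 * (m : ℂ) - 2 * k - 1)) * c2
      + (-ffa (-1 / 2) k * (-1 / 2 - (k : ℂ)) * ((k : ℂ) + 1) * (2 * k + 1)) * c3
      + (-((m : ℂ) - 1 / 2 - k) * (2 * k + 1) * (2 * k + 2) * ((m : ℂ) - k)) * ih'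

lemma ofE_congr (n : ℕ) (f g : ℕ → ℂ) (h : ∀ k ≤ n, f k = g k) : ofE n f = ofE n g :=
  Finset.sum_congr rfl fun k hk => by
    rw [h k (by rw [Finset.mem_range] at hk; omega)]

/-- `Q_m(p ⊠_{2m} q) = Q_m(p) ⊠_m Q_m(q) ⊠_m H_m[-1/(2m); 1-1/(2m)]`. -/
theorem stmt5 (m : ℕ) (hm : 1 ≤ m) (p q : Polynomial ℂ)
    (hpm : p.Monic) (hpd : p.natDegree = 2 * m)
    (hqm : q.Monic) (hqd : q.natDegree = 2 * m) :
    Qm m (boxtimes (2 * m) p q) =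
      boxtimes m (boxtimes m (Qm m p) (Qm m q))
        (hyp m ![-1 / (2 * (m : ℝ))] ![1 - 1 / (2 * (m : ℝ))]) := by
  have hm0 : (m : ℂ) ≠ 0 := Nat.cast_ne_zero.mpr (by omega)
  unfold Qm boxtimes hyp
  apply ofE_congr
  intro k hk
  rw [eC_ofE _ _ (show 2 * k ≤ 2 * m by omega),
      eC_ofE _ _ hk, eC_ofE _ _ hk, eC_ofE _ _ hk, eC_ofE _ _ hk]
  have hb : (m : ℂ) * ((-1 / (2 * (m : ℝ)) : ℝ) : ℂ) = -1 / 2 := by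
    push_cast
    field_simp
  have ha : (m : ℂ) * ((1 - 1 / (2 * (m : ℝ)) : ℝ) : ℂ) = (m : ℂ) - 1 / 2 := by
    push_cast
    field_simp
  simp only [Fin.prod_univ_one, Matrix.cons_val_zero, hb, ha]
  have hC2 : (((2 * m).choose (2 * k) : ℕ) : ℂ) ≠ 0 :=
    Nat.cast_ne_zero.mpr (Nat.choose_pos (by omega)).ne'
  have hCm : ((m.choose k : ℕ) : ℂ) ≠ 0 :=
    Nat.cast_ne_zero.mpr (Nat.choose_pos hk).ne'
  have hFa := ffa_ne_zero m hk
  have hkey := key m k hk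
  generalize eC (2 * m) (2 * k) p = Ep
  generalize eC (2 * m) (2 * k) q = Eq
  generalize hF : ffa ((m : ℂ) - 1 / 2) k = Fa at hFa hkey ⊢
  generalize hG : ffa (-1 / 2 : ℂ) k = G at hkey ⊢
  have hs : (-1 : ℂ) ^ k * (-1) ^ k = 1 := by
    rw [← pow_add, ← two_mul, pow_mul]
    norm_num
  field_simp
  linear_combination ((-1 : ℂ) ^ k * Ep * Eq) * hkey
    - (Ep * Eq * (m.choose k : ℂ) * Fa) * hs

end FFP
end
end

section
/- Let c_1, c_2, c_3 be nonzero reals, let n ≥ 1 and l_1, l_2, l_3 ≥ 1 be integers with l_k dividing n for k = 1,2,3, and for k = 1,2,3 let a_k, b_k be tuples of reals of lengths i_k, j_k such that n·(a_k)_s is not a nonnegative integer for every entry. Suppose that, as formal power series in x, F_{j_1,i_1}(−n b_1; −n a_1; c_1 x^{l_1}) · F_{j_2,i_2}(−n b_2; −n a_2; c_2 x^{l_2}) = F_{j_3,i_3}(−n b_3; −n a_3; c_3 x^{l_3}). For k = 1,2,3 define p_k(x) = ((−1)^{i_k+j_k+1} l_k^{l_k} c_k)^{n/l_k} · H_{n/l_k}[l_k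 b_k, 1−1/n, …, 1−(l_k−1)/n; l_k a_k] evaluated at ((−1)^{i_k+j_k+1}/(l_k^{l_k} c_k)) x^{l_k}. Then p_1 ⊞_n p_2 = p_3. -/
open Polynomial Finset

noncomputable section

namespace FFP

/-- The generalized hypergeometric series `F_{j,i}(u; v; c·x^l)` as a formal power
series in `x`. -/
def hgSub {i j : ℕ} (u : Fin j → ℝ) (v : Fin i → ℝ) (c : ℝ) (l : ℕ) : PowerSeries ℂ :=
  PowerSeries.mk fun n =>
    if l ∣ n then
      (∏ t, rfa ((u t : ℂ)) (n / l)) /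
          ((∏ s, rfa ((v s : ℂ)) (n / l)) * ((n / l).factorial : ℂ)) * (c : ℂ) ^ (n / l)
    else 0


/-- The polynomial `((-1)^(i+j+1) l^l c)^(n/l) · H_{n/l}[l·b, 1-1/n, …, 1-(l-1)/n; l·a]`
evaluated at `((-1)^(i+j+1)/(l^l c)) x^l`. -/
def pPoly (n l : ℕ) {i j : ℕ} (b : Fin j → ℝ) (a : Fin i → ℝ) (c : ℝ) : Polynomial ℂ :=
  Polynomial.C (((-1 : ℂ) ^ (i + j + 1) * (l : ℂ) ^ l * (c : ℂ)) ^ (n / l)) *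
    (hyp (n / l)
        (Fin.append (fun t => (l : ℝ) * b t)
          (fun r : Fin (l - 1) => 1 - (((r : ℕ) + 1 : ℝ)) / (n : ℝ)))
        (fun s => (l : ℝ) * a s)).comp
      (Polynomial.C ((-1 : ℂ) ^ (i + j + 1) / ((l : ℂ) ^ l * (c : ℂ))) * Polynomial.X ^ l)


lemma ffa_eq_rfa (x : ℂ) (k : ℕ) : ffa x k = (-1) ^ k * rfa (-x) k := by
  unfold ffa rfa
  calc ∏ i ∈ range k, (x - (i:ℂ)) = ∏ i ∈ range k, (-1) * (-x + i) := by
        refine prod_congr rfl fun i _ => by ring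
    _ = (-1) ^ k * ∏ i ∈ range k, (-x + (i:ℂ)) := by
        rw [prod_mul_distrib, prod_const, card_range]

lemma rfa_ofReal_ne_zero (x : ℝ) (h : ∀ i : ℕ, x + i ≠ 0) (k : ℕ) :
    rfa (x : ℂ) k ≠ 0 := by
  unfold rfa
  rw [Finset.prod_ne_zero_iff]
  intro i _
  have : ((x : ℂ) + i) = ((x + i : ℝ) : ℂ) := by push_cast; ring
  rw [this]
  exact_mod_cast h i

lemma ffa_ofReal_ne_zero (x : ℝ) (h : ∀ i : ℕ, x - i ≠ 0) (k : ℕ) :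
    ffa (x : ℂ) k ≠ 0 := by
  unfold ffa
  rw [Finset.prod_ne_zero_iff]
  intro i _
  have : ((x : ℂ) - i) = ((x - i : ℝ) : ℂ) := by push_cast; ring
  rw [this]
  exact_mod_cast h i

lemma ffa_nat (m k : ℕ) (h : k ≤ m) :
    ffa (m : ℂ) k = (k.factorial : ℂ) * (m.choose k) := by
  unfold ffa
  have : ∏ i ∈ range k, ((m : ℂ) - i) = ((∏ i ∈ range k, (m - i) : ℕ) : ℂ) := by
    push_cast [Nat.cast_prod]
    refine prod_congr rfl fun i hi => ?_
    rw [Nat.cast_sub (le_trans (Nat.le_of_lt_succ (Nat.lt_succ_of_lt (mem_range.1 hi))) h)]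
  rw [this, ← Nat.descFactorial_eq_prod_range, Nat.descFactorial_eq_factorial_mul_choose]
  push_cast; ring

lemma ffa_nat_ne_zero (m k : ℕ) (h : k ≤ m) : ffa (m : ℂ) k ≠ 0 := by
  rw [ffa_nat m k h]
  exact mul_ne_zero (Nat.cast_ne_zero.2 (Nat.factorial_ne_zero k))
    (Nat.cast_ne_zero.2 (Nat.choose_pos h).ne')

lemma ffa_mul (l m0 k : ℕ) (hl : 1 ≤ l) :
    ffa ((l * m0 : ℕ) : ℂ) (l * k) =
      (l : ℂ) ^ (l * k) * ∏ r ∈ range l, ffa ((m0 : ℂ) - r / l) k := by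
  have hl0 : (l : ℂ) ≠ 0 := Nat.cast_ne_zero.2 (by omega)
  have step : ∀ r ∈ range l, (l : ℂ) ^ k * ffa ((m0 : ℂ) - r / l) k
      = ∏ q ∈ range k, (((l * m0 : ℕ) : ℂ) - (r + l * q)) := by
    intro r _
    unfold ffa
    calc (l : ℂ) ^ k * ∏ q ∈ range k, ((m0 : ℂ) - r / l - q)
        = ∏ q ∈ range k, ((l : ℂ) * ((m0 : ℂ) - r / l - q)) := by
          rw [prod_mul_distrib, prod_const, card_range]
      _ = ∏ q ∈ range k, (((l * m0 : ℕ) : ℂ) - (r + l * q)) := by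
          refine prod_congr rfl fun q _ => ?_
          push_cast
          field_simp
          ring
  calc ffa ((l * m0 : ℕ) : ℂ) (l * k)
      = ∏ p ∈ range l ×ˢ range k, (((l * m0 : ℕ) : ℂ) - (p.1 + l * p.2)) := by
        unfold ffa
        refine (Finset.prod_bij' (fun p _ => p.1 + l * p.2) (fun m _ => (m % l, m / l))
          ?_ ?_ ?_ ?_ ?_).symm
        · rintro ⟨r, q⟩ hp
          simp only [mem_product, mem_range] at hp ⊢
          calc r + l * q < l * (q + 1) := by rw [Nat.mul_succ]; omega
            _ ≤ l * k := Nat.mul_le_mul_left l hp.2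
        · intro m hm
          simp only [mem_product, mem_range] at hm ⊢
          have hk : 0 < k := by
            rcases Nat.eq_zero_or_pos k with h | h
            · subst h; omega
            · exact h
          exact ⟨Nat.mod_lt _ (by omega), Nat.div_lt_of_lt_mul (by omega)⟩
        · rintro ⟨r, q⟩ hp
          simp only [mem_product, mem_range] at hp
          simp [Nat.add_mul_mod_self_left, Nat.mod_eq_of_lt hp.1,
            Nat.add_mul_div_left _ _ (show 0 < l by omega), Nat.div_eq_of_lt hp.1]
        · intro m _
          simp [Nat.mod_add_div]
        · rintro ⟨r, q⟩ _
          simp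
    _ = ∏ r ∈ range l, ∏ q ∈ range k, (((l * m0 : ℕ) : ℂ) - (r + l * q)) := by
        rw [Finset.prod_product]
    _ = ∏ r ∈ range l, ((l : ℂ) ^ k * ffa ((m0 : ℂ) - r / l) k) :=
        (prod_congr rfl step).symm
    _ = (l : ℂ) ^ (l * k) * ∏ r ∈ range l, ffa ((m0 : ℂ) - r / l) k := by
        rw [prod_mul_distrib, prod_const, card_range, ← pow_mul, mul_comm k l]
lemma ofE_comp_coeff (m l : ℕ) (f : ℕ → ℂ) (K γ : ℂ) (d : ℕ) :
    (Polynomial.C K * (ofE m f).comp (Polynomial.C γ * Polynomial.X ^ l)).coeff d =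
      ∑ k ∈ range (m + 1),
        (if l * (m - k) = d then K * ((-1) ^ k * f k) * γ ^ (m - k) else 0) := by
  unfold ofE
  rw [Polynomial.coeff_C_mul]
  simp only [Polynomial.comp, Polynomial.eval₂_finset_sum, Polynomial.eval₂_mul,
    Polynomial.eval₂_C, Polynomial.eval₂_X_pow, mul_pow, ← Polynomial.C_pow, ← pow_mul,
    Polynomial.finset_sum_coeff, Polynomial.coeff_C_mul, Polynomial.coeff_X_pow,
    Finset.mul_sum]
  refine Finset.sum_congr rfl fun k _ => ?_
  by_cases h : l * (m - k) = d
  · simp [h, mul_comm, mul_assoc, mul_left_comm]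
  · rw [if_neg h, if_neg (show ¬ d = l * (m - k) from fun h' => h h'.symm)]
    ring


lemma div_sign (S X Y : ℂ) (e : ℕ) (hS : S * S = 1) : X / (S ^ e * Y) = X * S ^ e / Y := by
  have h2 : S ^ e * S ^ e = 1 := by rw [← mul_pow, hS, one_pow]
  have hinv : (S ^ e)⁻¹ = S ^ e := inv_eq_of_mul_eq_one_right h2
  rw [← div_div, div_eq_mul_inv X (S ^ e), hinv]

lemma Kgamma (e L : ℂ) (hee : e * e = 1) (hL : L ≠ 0) (m0 k0 : ℕ) (h : k0 ≤ m0) :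
    (e * L) ^ m0 * (e / L) ^ (m0 - k0) = e ^ k0 * L ^ k0 := by
  obtain ⟨d, rfl⟩ : ∃ d, m0 = k0 + d := ⟨m0 - k0, (Nat.add_sub_cancel' h).symm⟩
  rw [show k0 + d - k0 = d from by omega, mul_pow, div_pow, pow_add, pow_add]
  have hee' : e ^ d * e ^ d = 1 := by rw [← mul_pow, hee, one_pow]
  have hLd : L ^ d ≠ 0 := pow_ne_zero _ hL
  field_simp
  linear_combination (e ^ k0) * hee'

lemma eC_pPoly (n l : ℕ) (hn : 1 ≤ n) (hl : 1 ≤ l) (hd : l ∣ n)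
    {i j : ℕ} (b : Fin j → ℝ) (a : Fin i → ℝ) (c : ℝ) (hc : c ≠ 0)
    (ha : ∀ s, ∀ k : ℕ, (n : ℝ) * a s ≠ k) (m : ℕ) (hm : m ≤ n) :
    eC n m (pPoly n l b a c) =
      (-1) ^ m * ffa (n : ℂ) m *
        (PowerSeries.coeff m)
          (hgSub (fun t => -(n : ℝ) * b t) (fun s => -(n : ℝ) * a s) c l) := by
  obtain ⟨m0, hnm0⟩ := hd
  have hlpos : 0 < l := hl
  have hm0pos : 0 < m0 := by
    rcases Nat.eq_zero_or_pos m0 with h | h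
    · subst h; simp at hnm0; omega
    · exact h
  have hql : n / l = m0 := by rw [hnm0, Nat.mul_div_cancel_left _ hlpos]
  rw [hgSub, PowerSeries.coeff_mk]
  unfold eC pPoly hyp
  simp only [hql]
  rw [ofE_comp_coeff]
  by_cases hdvd : l ∣ m
  · obtain ⟨k0, hk0⟩ := hdvd
    have hk0m0 : k0 ≤ m0 := Nat.le_of_mul_le_mul_left (by rw [← hk0, ← hnm0]; exact hm) hlpos
    have hmdiv : m / l = k0 := by rw [hk0, Nat.mul_div_cancel_left _ hlpos]
    have hside : ∀ k ∈ range (m0 + 1), k ≠ k0 →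
        (if l * (m0 - k) = n - m then
          ((-1 : ℂ) ^ (i + j + 1) * (l : ℂ) ^ l * (c : ℂ)) ^ m0 *
            ((-1) ^ k * ((m0.choose k : ℂ) *
              (∏ t, ffa ((m0 : ℂ) * ((Fin.append (fun t => (l : ℝ) * b t)
                (fun r : Fin (l - 1) => 1 - (((r : ℕ) + 1 : ℝ)) / (n : ℝ)) t : ℝ) : ℂ)) k) /
              ∏ s, ffa ((m0 : ℂ) * (((l : ℝ) * a s : ℝ) : ℂ)) k)) *
            ((-1 : ℂ) ^ (i + j + 1) / ((l : ℂ) ^ l * (c : ℂ))) ^ (m0 - k)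
        else 0) = 0 := by
      intro k hk hne
      rw [mem_range] at hk
      rw [if_neg]
      intro hcond
      have hkm0 : k ≤ m0 := by omega
      have h1 : l * (m0 - k) + m = n := by rw [hcond]; exact Nat.sub_add_cancel hm
      have h2 : l * k + l * (m0 - k) = n := by
        rw [← Nat.mul_add, Nat.add_sub_cancel' hkm0, hnm0]
      have hml : m = l * k := by omega
      exact hne (Nat.eq_of_mul_eq_mul_left hlpos (by omega))
    rw [if_pos ⟨k0, hk0⟩, hmdiv, Finset.sum_eq_single k0 hside
      (fun h => absurd (mem_range.2 (by omega)) h)]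
    have hcond : l * (m0 - k0) = n - m := by
      have h2 : l * k0 + l * (m0 - k0) = n := by
        rw [← Nat.mul_add, Nat.add_sub_cancel' hk0m0, hnm0]
      omega
    rw [if_pos hcond]
    -- basic nonvanishing facts
    have hl0 : (l : ℂ) ≠ 0 := Nat.cast_ne_zero.2 (by omega)
    have hn0 : (n : ℝ) ≠ 0 := Nat.cast_ne_zero.2 (by omega)
    have hS : (-1 : ℂ) ^ k0 * (-1 : ℂ) ^ k0 = 1 := by
      rw [← mul_pow]; norm_num
    -- the split of a product over `range l`
    have hsplit : ∀ g : ℕ → ℂ, ∏ r ∈ range l, g r = (∏ r ∈ range (l - 1), g (r + 1)) * g 0 := by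
      intro g
      conv_lhs => rw [show l = (l - 1) + 1 by omega]
      exact prod_range_succ' g (l - 1)
    -- the B-product
    have hprodB : (∏ t : Fin (j + (l - 1)),
          ffa ((m0 : ℂ) * ((Fin.append (fun t => (l : ℝ) * b t)
            (fun r : Fin (l - 1) => 1 - (((r : ℕ) + 1 : ℝ)) / (n : ℝ)) t : ℝ) : ℂ)) k0) =
        (((-1 : ℂ) ^ k0) ^ j * ∏ t : Fin j, rfa ((↑(-(n : ℝ) * b t) : ℂ)) k0) *
          ∏ r ∈ range (l - 1), ffa ((m0 : ℂ) - (((r : ℕ) : ℂ) + 1) / l) k0 := by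
      rw [Fin.prod_univ_add]
      congr 1
      · calc (∏ t : Fin j, ffa ((m0 : ℂ) * ((Fin.append (fun t => (l : ℝ) * b t)
              (fun r : Fin (l - 1) => 1 - (((r : ℕ) + 1 : ℝ)) / (n : ℝ))
              (Fin.castAdd (l - 1) t) : ℝ) : ℂ)) k0)
            = ∏ t : Fin j, ((-1 : ℂ) ^ k0 * rfa ((↑(-(n : ℝ) * b t) : ℂ)) k0) := by
              refine prod_congr rfl fun t _ => ?_
              rw [Fin.append_left, ffa_eq_rfa]
              congr 2
              push_cast
              rw [hnm0]
              push_cast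
              ring
          _ = ((-1 : ℂ) ^ k0) ^ j * ∏ t : Fin j, rfa ((↑(-(n : ℝ) * b t) : ℂ)) k0 := by
              rw [prod_mul_distrib, prod_const, card_univ, Fintype.card_fin]
      · simp only [Fin.append_right]
        rw [Fin.prod_univ_eq_prod_range
          (fun r => ffa ((m0 : ℂ) * ((1 - ((r : ℝ) + 1) / (n : ℝ) : ℝ) : ℂ)) k0) (l - 1)]
        refine prod_congr rfl fun r hr => ?_
        congr 1
        push_cast
        rw [hnm0]
        push_cast
        have : ((l : ℂ) * m0) ≠ 0 := by
          exact mul_ne_zero hl0 (Nat.cast_ne_zero.2 (by omega))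
        have hm0c : (m0 : ℂ) ≠ 0 := Nat.cast_ne_zero.2 (by omega)
        field_simp
    -- the A-product
    have hprodA : (∏ s : Fin i, ffa ((m0 : ℂ) * (((l : ℝ) * a s : ℝ) : ℂ)) k0) =
        ((-1 : ℂ) ^ k0) ^ i * ∏ s : Fin i, rfa ((↑(-(n : ℝ) * a s) : ℂ)) k0 := by
      calc (∏ s : Fin i, ffa ((m0 : ℂ) * (((l : ℝ) * a s : ℝ) : ℂ)) k0)
          = ∏ s : Fin i, ((-1 : ℂ) ^ k0 * rfa ((↑(-(n : ℝ) * a s) : ℂ)) k0) := by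
            refine prod_congr rfl fun t _ => ?_
            rw [ffa_eq_rfa]
            congr 2
            push_cast
            rw [hnm0]
            push_cast
            ring
        _ = ((-1 : ℂ) ^ k0) ^ i * ∏ s : Fin i, rfa ((↑(-(n : ℝ) * a s) : ℂ)) k0 := by
            rw [prod_mul_distrib, prod_const, card_univ, Fintype.card_fin]
    -- K times gamma power
    have hLne : (l : ℂ) ^ l * (c : ℂ) ≠ 0 :=
      mul_ne_zero (pow_ne_zero _ hl0) (Complex.ofReal_ne_zero.2 hc)
    have hee : (-1 : ℂ) ^ (i + j + 1) * (-1 : ℂ) ^ (i + j + 1) = 1 := by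
      rw [← mul_pow]; norm_num
    have hKg : ((-1 : ℂ) ^ (i + j + 1) * (l : ℂ) ^ l * (c : ℂ)) ^ m0 *
          ((-1 : ℂ) ^ (i + j + 1) / ((l : ℂ) ^ l * (c : ℂ))) ^ (m0 - k0) =
        ((-1 : ℂ) ^ k0) ^ (i + j + 1) * ((l : ℂ) ^ (l * k0) * (c : ℂ) ^ k0) := by
      rw [mul_assoc, Kgamma _ _ hee hLne m0 k0 hk0m0, mul_pow, ← pow_mul, ← pow_mul]
      rw [mul_comm (i + j + 1) k0, pow_mul]
    -- the falling factorial of n splits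
    have hffn : ffa ((n : ℕ) : ℂ) m =
        (l : ℂ) ^ (l * k0) * ((((k0.factorial : ℂ)) * ((m0.choose k0 : ℂ))) *
          ∏ r ∈ range (l - 1), ffa ((m0 : ℂ) - (((r : ℕ) : ℂ) + 1) / l) k0) := by
      rw [hnm0, hk0, ffa_mul l m0 k0 hl,
        hsplit (fun r => ffa ((m0 : ℂ) - (r : ℂ) / l) k0)]
      have h0 : ffa ((m0 : ℂ) - ((0 : ℕ) : ℂ) / l) k0 = ffa ((m0 : ℂ)) k0 := by
        norm_num
      push_cast at h0 ⊢
      rw [h0, ffa_nat m0 k0 hk0m0]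
      ring
    have hPa : (∏ s : Fin i, rfa ((↑(-(n : ℝ) * a s) : ℂ)) k0) ≠ 0 := by
      rw [Finset.prod_ne_zero_iff]
      intro s _
      refine rfa_ofReal_ne_zero _ (fun q => ?_) k0
      have := ha s q
      intro hq
      apply this
      linarith
    have hfac : ((k0.factorial : ℂ)) ≠ 0 := Nat.cast_ne_zero.2 (Nat.factorial_ne_zero k0)
    rw [mul_right_comm, hKg, hprodB, hprodA, hffn]
    rw [div_sign ((-1 : ℂ) ^ k0) _ _ i hS]
    have hsign : ((-1 : ℂ) ^ k0) ^ (i + j + 1) * ((-1 : ℂ) ^ k0) * ((-1 : ℂ) ^ k0) ^ j *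
        ((-1 : ℂ) ^ k0) ^ i = 1 := by
      have hSi : ((-1 : ℂ) ^ k0) ^ i * ((-1 : ℂ) ^ k0) ^ i = 1 := by
        rw [← mul_pow, hS, one_pow]
      have hSj : ((-1 : ℂ) ^ k0) ^ j * ((-1 : ℂ) ^ k0) ^ j = 1 := by
        rw [← mul_pow, hS, one_pow]
      calc ((-1 : ℂ) ^ k0) ^ (i + j + 1) * ((-1 : ℂ) ^ k0) * ((-1 : ℂ) ^ k0) ^ j *
            ((-1 : ℂ) ^ k0) ^ i
          = (((-1 : ℂ) ^ k0) * ((-1 : ℂ) ^ k0)) * (((-1 : ℂ) ^ k0) ^ i * ((-1 : ℂ) ^ k0) ^ i) *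
              (((-1 : ℂ) ^ k0) ^ j * ((-1 : ℂ) ^ k0) ^ j) := by ring
        _ = 1 := by rw [hS, hSi, hSj]; ring
    have hPa2 : (∏ x : Fin i, rfa (-((n : ℂ) * ((a x : ℝ) : ℂ))) k0) ≠ 0 := by
      rw [Finset.prod_ne_zero_iff]
      intro s _
      have hcast : (-((n : ℂ) * ((a s : ℝ) : ℂ))) = ((-(n : ℝ) * a s : ℝ) : ℂ) := by
        push_cast; ring
      rw [hcast]
      refine rfa_ofReal_ne_zero _ (fun q => ?_) k0
      intro hq
      exact ha s q (by linarith)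
    push_cast at hPa2 ⊢
    field_simp
    linear_combination (↑c ^ k0 * ↑(m0.choose k0) *
      (∏ x : Fin j, rfa (-((n : ℂ) * ↑(b x))) k0) *
      (∏ x ∈ Finset.range (l - 1), ffa (((m0 : ℂ) * ↑l - (↑x + 1)) / ↑l) k0)) * hsign
  · rw [if_neg hdvd, mul_zero, Finset.sum_eq_zero, mul_zero]
    intro k hk
    rw [mem_range] at hk
    rw [if_neg]
    intro hcond
    have hkm0 : k ≤ m0 := by omega
    have h1 : l * (m0 - k) + m = n := by rw [hcond]; exact Nat.sub_add_cancel hm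
    have h2 : l * k + l * (m0 - k) = n := by
      rw [← Nat.mul_add, Nat.add_sub_cancel' hkm0, hnm0]
    exact hdvd ⟨k, by omega⟩


lemma natDegree_ofE_le (n : ℕ) (f : ℕ → ℂ) : (ofE n f).natDegree ≤ n := by
  unfold ofE
  refine Polynomial.natDegree_sum_le_of_forall_le _ _ fun k hk => ?_
  exact le_trans (Polynomial.natDegree_C_mul_le _ _)
    (le_trans (Polynomial.natDegree_X_pow_le _) (Nat.sub_le n k))

lemma natDegree_pPoly_le (n l : ℕ) (hd : l ∣ n)
    {i j : ℕ} (b : Fin j → ℝ) (a : Fin i → ℝ) (c : ℝ) :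
    (pPoly n l b a c).natDegree ≤ n := by
  unfold pPoly hyp
  refine le_trans (Polynomial.natDegree_C_mul_le _ _) ?_
  refine le_trans (Polynomial.natDegree_comp_le) ?_
  have h1 : (ofE (n / l) (fun k => ((n / l).choose k : ℂ) *
      (∏ t, ffa (((n / l : ℕ) : ℂ) * ((Fin.append (fun t => (l : ℝ) * b t)
        (fun r : Fin (l - 1) => 1 - (((r : ℕ) + 1 : ℝ)) / (n : ℝ)) t : ℝ) : ℂ)) k) /
      ∏ s, ffa (((n / l : ℕ) : ℂ) * (((l : ℝ) * a s : ℝ) : ℂ)) k)).natDegree ≤ n / l :=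
    natDegree_ofE_le _ _
  have h2 : (Polynomial.C ((-1 : ℂ) ^ (i + j + 1) / ((l : ℂ) ^ l * (c : ℂ))) *
      Polynomial.X ^ l).natDegree ≤ l :=
    le_trans (Polynomial.natDegree_C_mul_le _ _) (Polynomial.natDegree_X_pow_le _)
  calc _ ≤ (n / l) * l := Nat.mul_le_mul h1 h2
    _ = n := Nat.div_mul_cancel hd

lemma ofE_eC (n : ℕ) (p : Polynomial ℂ) (h : p.natDegree ≤ n) :
    ofE n (fun k => eC n k p) = p := by
  unfold ofE eC
  have h1 : ∀ k : ℕ, Polynomial.C ((-1 : ℂ) ^ k * ((-1) ^ k * p.coeff (n - k))) *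
      Polynomial.X ^ (n - k) = Polynomial.C (p.coeff (n - k)) * Polynomial.X ^ (n - k) := by
    intro k
    congr 1
    rw [← mul_assoc, ← mul_pow]
    norm_num
  simp only [h1]
  have h2 := Finset.sum_range_reflect
    (fun k => Polynomial.C (p.coeff k) * Polynomial.X ^ k) (n + 1)
  simp only [Nat.add_sub_cancel] at h2
  calc (∑ k ∈ Finset.range (n + 1), Polynomial.C (p.coeff (n - k)) * Polynomial.X ^ (n - k))
      = ∑ k ∈ Finset.range (n + 1), Polynomial.C (p.coeff k) * Polynomial.X ^ k := h2
    _ = p := by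
      conv_rhs => rw [p.as_sum_range' (n + 1) (Nat.lt_succ_of_le h)]
      simp [Polynomial.C_mul_X_pow_eq_monomial]

/-- additive convolution of hypergeometric polynomials coming from a
product identity of generalized hypergeometric series. -/
theorem stmt9 (n : ℕ) (hn : 1 ≤ n) (l1 l2 l3 : ℕ)
    (hl1 : 1 ≤ l1) (hl2 : 1 ≤ l2) (hl3 : 1 ≤ l3)
    (hd1 : l1 ∣ n) (hd2 : l2 ∣ n) (hd3 : l3 ∣ n)
    (c1 c2 c3 : ℝ) (hc1 : c1 ≠ 0) (hc2 : c2 ≠ 0) (hc3 : c3 ≠ 0)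
    {i1 j1 i2 j2 i3 j3 : ℕ}
    (a1 : Fin i1 → ℝ) (b1 : Fin j1 → ℝ) (a2 : Fin i2 → ℝ) (b2 : Fin j2 → ℝ)
    (a3 : Fin i3 → ℝ) (b3 : Fin j3 → ℝ)
    (ha1 : ∀ s, ∀ k : ℕ, (n : ℝ) * a1 s ≠ k)
    (ha2 : ∀ s, ∀ k : ℕ, (n : ℝ) * a2 s ≠ k)
    (ha3 : ∀ s, ∀ k : ℕ, (n : ℝ) * a3 s ≠ k)
    (hF : hgSub (fun t => -(n : ℝ) * b1 t) (fun s => -(n : ℝ) * a1 s) c1 l1 *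
            hgSub (fun t => -(n : ℝ) * b2 t) (fun s => -(n : ℝ) * a2 s) c2 l2 =
          hgSub (fun t => -(n : ℝ) * b3 t) (fun s => -(n : ℝ) * a3 s) c3 l3) :
    boxplus n (pPoly n l1 b1 a1 c1) (pPoly n l2 b2 a2 c2) = pPoly n l3 b3 a3 c3 := by
  have key : ∀ k, k ≤ n → ffa (n : ℂ) k * ∑ ij ∈ Finset.HasAntidiagonal.antidiagonal k,
      eC n ij.1 (pPoly n l1 b1 a1 c1) * eC n ij.2 (pPoly n l2 b2 a2 c2) /
        (ffa (n : ℂ) ij.1 * ffa (n : ℂ) ij.2) = eC n k (pPoly n l3 b3 a3 c3) := by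
    intro k hk
    have hsum : ∀ ij ∈ Finset.HasAntidiagonal.antidiagonal k,
        eC n ij.1 (pPoly n l1 b1 a1 c1) * eC n ij.2 (pPoly n l2 b2 a2 c2) /
          (ffa (n : ℂ) ij.1 * ffa (n : ℂ) ij.2) =
        (-1 : ℂ) ^ k *
          ((PowerSeries.coeff ij.1)
              (hgSub (fun t => -(n : ℝ) * b1 t) (fun s => -(n : ℝ) * a1 s) c1 l1) *
            (PowerSeries.coeff ij.2)
              (hgSub (fun t => -(n : ℝ) * b2 t) (fun s => -(n : ℝ) * a2 s) c2 l2)) := by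
      rintro ⟨u, v⟩ huv
      rw [Finset.HasAntidiagonal.mem_antidiagonal] at huv
      have hu : u ≤ n := by omega
      have hv : v ≤ n := by omega
      have hffu : ffa (n : ℂ) u ≠ 0 := ffa_nat_ne_zero n u hu
      have hffv : ffa (n : ℂ) v ≠ 0 := ffa_nat_ne_zero n v hv
      rw [eC_pPoly n l1 hn hl1 hd1 b1 a1 c1 hc1 ha1 u hu,
          eC_pPoly n l2 hn hl2 hd2 b2 a2 c2 hc2 ha2 v hv, ← huv, pow_add]
      field_simp
    rw [Finset.sum_congr rfl hsum, ← Finset.mul_sum,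
      eC_pPoly n l3 hn hl3 hd3 b3 a3 c3 hc3 ha3 k hk, ← hF, PowerSeries.coeff_mul]
    ring
  conv_rhs => rw [← ofE_eC n (pPoly n l3 b3 a3 c3) (natDegree_pPoly_le n l3 hd3 b3 a3 c3)]
  unfold boxplus ofE
  refine Finset.sum_congr rfl fun k hk => ?_
  rw [mem_range] at hk
  simp only [key k (by omega)]

end FFP
end
end
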